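/- arXiv:0706.3327 — 4 statements merged into one kernel-verified Lean document; each statement's English description precedes it below -/
import Mathlib

section
/- Crossing unitarity for the R-matrix: the graded partial transpose of R(x) in the second factor equals R^{t₂}(x) = x·id − ħQ, and for all x ∈ ℂ one has R^{t₂}(x)∘R^{t₂}(ħ(M−N)−x) = x·(ħ(M−N)−x)·id_{V⊗V}; in particular, whenever x ≠ 0 and x ≠ ħ(M−N), R^{t₂}(x) is invertible with inverse proportional to R^{t₂}(ħ(M−N)−x). -/
open scoped BigOperators

noncomputable section

namespace SuperSpin

/-- The ℤ₂-grading on `Fin n` (0-indexed): grade `0` for the first `M` indices,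
grade `1` for the remaining ones.  `gr M i` is the grade of the (paper, 1-indexed)
index `i+1`. -/
def gr (M : ℕ) {n : ℕ} (i : Fin n) : ℕ := if (i : ℕ) < M then 0 else 1

/-- `End(V ⊗ V)` for `V = ℂⁿ`, as matrices indexed by pairs. -/
abbrev E2 (n : ℕ) := Matrix (Fin n × Fin n) (Fin n × Fin n) ℂ

/-- The graded permutation operator `P (e_c ⊗ e_d) = (-1)^{[c][d]} e_d ⊗ e_c`. -/
def Pm (M n : ℕ) : E2 n :=
  Matrix.of fun p q =>
    if p.1 = q.2 ∧ p.2 = q.1 then ((-1 : ℂ) ^ (gr M q.1 * gr M q.2)) else 0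

/-- The R-matrix `R(u) = u·id - hb·P`. -/
def Rm (M n : ℕ) (hb u : ℂ) : E2 n := u • (1 : E2 n) - hb • Pm M n

/-- The operator `Q (e_c ⊗ e_d) = δ_{cd} (-1)^{[d]} ∑_a e_a ⊗ e_a`. -/
def Qm (M n : ℕ) : E2 n :=
  Matrix.of fun p q => if q.1 = q.2 ∧ p.1 = p.2 then ((-1 : ℂ) ^ (gr M q.2)) else 0

/-- Graded partial transposition in the second tensor factor. -/
def pt2 (M n : ℕ) (X : E2 n) : E2 n :=
  Matrix.of fun p q =>
    ((-1 : ℂ) ^ (gr M p.2 * gr M q.2 + gr M q.2)) * X (p.1, q.2) (q.1, p.2)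

/-- Graded transposition of an `n × n` matrix: `(Aᵗ)_{ij} = (-1)^{[i][j]+[j]} A_{ji}`. -/
def gTr (M : ℕ) {n : ℕ} (A : Matrix (Fin n) (Fin n) ℂ) : Matrix (Fin n) (Fin n) ℂ :=
  Matrix.of fun i j => ((-1 : ℂ) ^ (gr M i * gr M j + gr M j)) * A j i

/-- `A ⊗ id` acting on `V ⊗ V`. -/
def m1 {n : ℕ} (A : Matrix (Fin n) (Fin n) ℂ) : E2 n :=
  Matrix.of fun p q => A p.1 q.1 * (if p.2 = q.2 then 1 else 0)

/-- `id ⊗ A` acting on `V ⊗ V`. -/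
def m2 {n : ℕ} (A : Matrix (Fin n) (Fin n) ℂ) : E2 n :=
  Matrix.of fun p q => (if p.1 = q.1 then 1 else 0) * A p.2 q.2

/-- `R₂₁(x) = P ∘ R(x) ∘ P`. -/
def R21 (M n : ℕ) (hb u : ℂ) : E2 n := Pm M n * Rm M n hb u * Pm M n

/-- The graded reflection equation for a matrix-valued function `K`. -/
def GRE (M n : ℕ) (hb : ℂ) (K : ℂ → Matrix (Fin n) (Fin n) ℂ) : Prop :=
  ∀ u v : ℂ,
    Rm M n hb (u - v) * m1 (K u) * R21 M n hb (u + v) * m2 (K v)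
      = m2 (K v) * Rm M n hb (u + v) * m1 (K u) * R21 M n hb (u - v)

/-- `End(V^{⊗m})`, with basis indexed by functions `Fin m → Fin n`. -/
abbrev Ten (n m : ℕ) := Matrix (Fin m → Fin n) (Fin m → Fin n) ℂ

/-- The Koszul embedding of `X ∈ End(V ⊗ V)` acting on the factors `i < j` of
`V^{⊗ m}` (identity on the other factors, with the graded crossing signs produced
by conjugation with the adjacent graded permutation operators). -/
def kEmb (M n m : ℕ) (i j : Fin m) (X : E2 n) : Ten n m :=
  Matrix.of fun f g =>
    (if ∀ l, l ≠ i → l ≠ j → f l = g l then (1 : ℂ) else 0)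
      * X (f i, f j) (g i, g j)
      * (-1 : ℂ) ^ ((gr M (f j) + gr M (g j)) *
          ∑ l ∈ Finset.univ.filter (fun l => i < l ∧ l < j), gr M (g l))

/-- The monodromy matrix `𝒯(u) = R_{1,2}(u-a₁) ⋯ R_{1,L+1}(u-a_L)` of the
inhomogeneous fundamental chain, acting on `V ⊗ H = V^{⊗(L+1)}` (auxiliary space
in position `0`). -/
def Tmono (M n L : ℕ) (hb : ℂ) (a : Fin L → ℂ) (u : ℂ) : Ten n (L + 1) :=
  (List.ofFn fun k : Fin L => kEmb M n (L + 1) 0 k.succ (Rm M n hb (u - a k))).prod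

/-- The block entry `X_{ab} ∈ End(H)` of an operator `X` on `V ⊗ H`. -/
def blk {n L : ℕ} (X : Ten n (L + 1)) (a b : Fin n) : Ten n L :=
  Matrix.of fun f g => X (Fin.cons a f) (Fin.cons b g)

/-- Supertrace transfer matrix `st(u) = ∑ (-1)^{[a]} 𝒯_{aa}(u)`. -/
def stm (M n L : ℕ) (hb : ℂ) (a : Fin L → ℂ) (u : ℂ) : Ten n L :=
  ∑ i : Fin n, ((-1 : ℂ) ^ gr M i) • blk (Tmono M n L hb a u) i i

/-- Trace transfer matrix `t(u) = ∑ 𝒯_{aa}(u)`. -/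
def tm (M n L : ℕ) (hb : ℂ) (a : Fin L → ℂ) (u : ℂ) : Ten n L :=
  ∑ i : Fin n, blk (Tmono M n L hb a u) i i

/-- The pseudovacuum `v⁺ = e₁ ⊗ ⋯ ⊗ e₁`. -/
def vplus (n L : ℕ) : (Fin L → Fin n) → ℂ :=
  fun f => if ∀ l, (f l : ℕ) = 0 then 1 else 0

/-- The pseudovacuum weights `λ_j(w)` (paper index `j ≥ 1`):
`λ₁(w) = ∏ (w - a_m - hb)`, `λ_j(w) = ∏ (w - a_m)` for `j ≥ 2`. -/
def lamP (L : ℕ) (hb : ℂ) (a : Fin L → ℂ) (j : ℕ) (w : ℂ) : ℂ :=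
  if j = 1 then ∏ m, (w - a m - hb) else ∏ m, (w - a m)

/-- `c_m = ∑_{l=1}^m (-1)^{[l]}` (so `c_0 = 0`). -/
def cP (M : ℕ) (m : ℕ) : ℂ := ∑ l ∈ Finset.range m, (if l < M then (1 : ℂ) else -1)

/-- `λ'_k(w) = ∏_{m=1}^{k-1} λ_m(w + hb c_m) / ∏_{m=1}^{k} λ_m(w + hb c_{m-1})`
(paper index `k ≥ 1`). -/
def lamPr (M L : ℕ) (hb : ℂ) (a : Fin L → ℂ) (k : ℕ) (w : ℂ) : ℂ :=
  (∏ m ∈ Finset.Icc 1 (k - 1), lamP L hb a m (w + hb * cP M m)) /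
    (∏ m ∈ Finset.Icc 1 k, lamP L hb a m (w + hb * cP M (m - 1)))

/-- The global generators `Δ(E_{ab}) = ∑_k E_{ab}^{(k)}` on `H = V^{⊗L}`. -/
def Delta (M n L : ℕ) (a b : Fin n) : Ten n L :=
  ∑ k : Fin L, Matrix.of fun f g =>
    if f k = a ∧ g k = b ∧ ∀ l, l ≠ k → f l = g l then
      (-1 : ℂ) ^ ((gr M a + gr M b) *
        ∑ l ∈ Finset.univ.filter (fun l => l < k), gr M (g l))
    else 0

/-- The diagonal entry (at paper index `j`, `1 ≤ j ≤ n`) of the diagonal boundary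
matrix with parameter `ξ` and blocks determined by `L₁ ≤ L₂`. -/
def kdval (ξ : ℂ) (L₁ L₂ : ℕ) (j : ℕ) (u : ℂ) : ℂ :=
  if L₁ < j ∧ j ≤ L₂ then u + ξ else ξ - u

/-- The diagonal boundary matrix `K(u)`. -/
def Kdiag (n : ℕ) (ξ : ℂ) (L₁ L₂ : ℕ) (u : ℂ) : Matrix (Fin n) (Fin n) ℂ :=
  Matrix.diagonal fun j => kdval ξ L₁ L₂ ((j : ℕ) + 1) u

/-- An `n × n` matrix acting on the auxiliary (first) factor of `V^{⊗(L+1)}`. -/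
def onAux {n L : ℕ} (A : Matrix (Fin n) (Fin n) ℂ) : Ten n (L + 1) :=
  Matrix.of fun f g => A (f 0) (g 0) * (if ∀ l, l ≠ 0 → f l = g l then 1 else 0)

/-- The double-row monodromy matrix `ℬ(u) = 𝒯(u) (K(u) ⊗ id_H) 𝒯(-u)⁻¹`. -/
def Bmono (M n L : ℕ) (hb : ℂ) (a : Fin L → ℂ) (ξ : ℂ) (L₁ L₂ : ℕ) (u : ℂ) :
    Ten n (L + 1) :=
  Tmono M n L hb a u * onAux (Kdiag n ξ L₁ L₂ u) * (Tmono M n L hb a (-u))⁻¹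

/-- The open-chain transfer matrix `b(u) = ∑ (-1)^{[a]} K⁺_{aa}(u) ℬ_{aa}(u)`. -/
def bop (M n L : ℕ) (hb : ℂ) (a : Fin L → ℂ) (ξ : ℂ) (L₁ L₂ : ℕ)
    (ξ' : ℂ) (L₁' L₂' : ℕ) (u : ℂ) : Ten n L :=
  ∑ i : Fin n,
    (((-1 : ℂ) ^ gr M i) * Kdiag n ξ' L₁' L₂' u i i) •
      blk (Bmono M n L hb a ξ L₁ L₂ u) i i

/-- The functions `g_k(u)` of the open-chain pseudovacuum (paper index `k ≥ 1`). -/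
def gP (M : ℕ) (hb ξ : ℂ) (L₁ L₂ : ℕ) (k : ℕ) (u : ℂ) : ℂ :=
  if k ≤ L₁ then ξ - u
  else if k ≤ L₂ then ξ + u - hb * cP M L₁
  else ξ - u - hb * (cP M L₁ - cP M L₂)

/-- The functions `a_k(u)` of the open-chain pseudovacuum (paper index `k ≥ 1`). -/
def aP (M L : ℕ) (hb : ℂ) (a : Fin L → ℂ) (k : ℕ) (u : ℂ) : ℂ :=
  (if k ≤ M then (1 : ℂ) else -1) * hb *
    (2 * u * lamP L hb a k u * lamPr M L hb a k (-u)) /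
    ((2 * u - hb * cP M k) * (2 * u - hb * cP M (k - 1)))

lemma gr_mul_self (M n : ℕ) (i : Fin n) : gr M i * gr M i = gr M i := by
  unfold gr; split <;> norm_num

lemma sign1 (v : ℕ) : ((-1 : ℂ)) ^ (v * v + v) = 1 := by
  have h : v * v + v = v * (v + 1) := by ring
  rw [h]
  exact (Nat.even_mul_succ_self v).neg_one_pow

lemma sign2 (u v : ℕ) : ((-1 : ℂ)) ^ (u * v) * (-1) ^ (u * v + v) = (-1) ^ v := by
  rw [← pow_add, show u * v + (u * v + v) = 2 * (u * v) + v from by ring, pow_add, pow_mul]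
  norm_num

lemma pt2_Rm (M n : ℕ) (hb x : ℂ) :
    pt2 M n (Rm M n hb x) = x • (1 : E2 n) - hb • Qm M n := by
  ext ⟨a, b⟩ ⟨c, d⟩
  simp only [pt2, Rm, Pm, Qm, Matrix.sub_apply, Matrix.smul_apply, Matrix.one_apply,
    Matrix.of_apply, smul_eq_mul, Prod.mk.injEq]
  by_cases h1 : a = c <;> by_cases h2 : b = d <;> by_cases h3 : a = b <;>
    by_cases h4 : d = c <;>
    simp_all [eq_comm, mul_sub, mul_comm, mul_assoc, sign1, sign2, gr_mul_self]

lemma sum_sign (M N : ℕ) :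
    (∑ i : Fin (M + N), ((-1 : ℂ)) ^ gr M i) = (M : ℂ) - (N : ℂ) := by
  have h : ∀ i : Fin (M + N), ((-1 : ℂ)) ^ gr M i
      = (fun j : ℕ => if j < M then (1 : ℂ) else -1) (i : ℕ) := by
    intro i; simp [gr, apply_ite (fun e : ℕ => ((-1 : ℂ)) ^ e)]
  rw [Finset.sum_congr rfl fun i _ => h i,
    Fin.sum_univ_eq_sum_range (fun j => if j < M then (1 : ℂ) else -1) (M + N),
    Finset.range_eq_Ico, ← Finset.sum_Ico_consecutive _ (Nat.zero_le M) (Nat.le_add_right M N)]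
  have h1 : (∑ j ∈ Finset.Ico 0 M, if j < M then (1 : ℂ) else -1)
      = ∑ j ∈ Finset.Ico 0 M, (1 : ℂ) :=
    Finset.sum_congr rfl fun j hj => if_pos (Finset.mem_Ico.1 hj).2
  have h2 : (∑ j ∈ Finset.Ico M (M + N), if j < M then (1 : ℂ) else -1)
      = ∑ j ∈ Finset.Ico M (M + N), (-1 : ℂ) :=
    Finset.sum_congr rfl fun j hj => if_neg (Nat.not_lt.2 (Finset.mem_Ico.1 hj).1)
  rw [h1, h2, Finset.sum_const, Finset.sum_const, Nat.card_Ico, Nat.card_Ico,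
    Nat.add_sub_cancel_left]
  simp; ring

lemma Qm_mul_Qm (M N : ℕ) :
    Qm M (M + N) * Qm M (M + N) = ((M : ℂ) - (N : ℂ)) • Qm M (M + N) := by
  ext ⟨a, b⟩ ⟨c, d⟩
  rw [Matrix.mul_apply]
  simp only [Qm, Matrix.of_apply, Matrix.smul_apply, smul_eq_mul, Fintype.sum_prod_type]
  by_cases hab : a = b <;> by_cases hcd : c = d <;>
    simp_all [Finset.sum_ite_eq, mul_comm]
  rw [← Finset.mul_sum, sum_sign, mul_comm]

theorem statement3' (M N : ℕ) (hM : 1 ≤ M) (hN : 1 ≤ N) (hb : ℂ) (hhb : hb ≠ 0) :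
    (∀ x : ℂ, pt2 M (M + N) (Rm M (M + N) hb x)
        = x • (1 : E2 (M + N)) - hb • Qm M (M + N)) ∧
    (∀ x : ℂ,
      pt2 M (M + N) (Rm M (M + N) hb x) *
        pt2 M (M + N) (Rm M (M + N) hb (hb * ((M : ℂ) - (N : ℂ)) - x))
      = (x * (hb * ((M : ℂ) - (N : ℂ)) - x)) • (1 : E2 (M + N))) ∧
    (∀ x : ℂ, x ≠ 0 → x ≠ hb * ((M : ℂ) - (N : ℂ)) →
      pt2 M (M + N) (Rm M (M + N) hb x) *
        ((x * (hb * ((M : ℂ) - (N : ℂ)) - x))⁻¹ •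
          pt2 M (M + N) (Rm M (M + N) hb (hb * ((M : ℂ) - (N : ℂ)) - x))) = 1 ∧
      ((x * (hb * ((M : ℂ) - (N : ℂ)) - x))⁻¹ •
          pt2 M (M + N) (Rm M (M + N) hb (hb * ((M : ℂ) - (N : ℂ)) - x))) *
        pt2 M (M + N) (Rm M (M + N) hb x) = 1) := by
  set c : ℂ := hb * ((M : ℂ) - (N : ℂ)) with hc
  have key : ∀ x y : ℂ, x + y = c →
      pt2 M (M + N) (Rm M (M + N) hb x) * pt2 M (M + N) (Rm M (M + N) hb y)
        = (x * y) • (1 : E2 (M + N)) := by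
    intro x y hxy
    rw [pt2_Rm, pt2_Rm]
    set Q := Qm M (M + N) with hQ
    have expand : (x • (1 : E2 (M + N)) - hb • Q) * (y • (1 : E2 (M + N)) - hb • Q)
        = (x * y) • (1 : E2 (M + N)) + (hb * hb * ((M : ℂ) - (N : ℂ)) - x * hb - hb * y) • Q := by
      rw [sub_mul, mul_sub, mul_sub, smul_mul_assoc, smul_mul_assoc, one_mul,
        mul_smul_comm, mul_smul_comm, mul_one, smul_mul_assoc, mul_smul_comm,
        hQ, Qm_mul_Qm M N]
      simp only [one_mul, smul_smul]
      module
    rw [expand]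
    have hxy' : x + y = hb * ((M : ℂ) - (N : ℂ)) := hxy
    have hco : hb * hb * ((M : ℂ) - (N : ℂ)) - x * hb - hb * y = 0 := by
      linear_combination (-hb) * hxy'
    rw [hco, zero_smul, add_zero]
  refine ⟨fun x => pt2_Rm M (M + N) hb x, fun x => key x (c - x) (by ring), ?_⟩
  intro x hx0 hxc
  have hy0 : c - x ≠ 0 := sub_ne_zero.2 (Ne.symm hxc)
  have hs : x * (c - x) ≠ 0 := mul_ne_zero hx0 hy0
  constructor
  · rw [Matrix.mul_smul, key x (c - x) (by ring), smul_smul, inv_mul_cancel₀ hs, one_smul]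
  · rw [Matrix.smul_mul, key (c - x) x (by ring), smul_smul]
    rw [show (c - x) * x = x * (c - x) from mul_comm _ _, inv_mul_cancel₀ hs, one_smul]
/-- Crossing unitarity: `R^{t₂}(x) = x·id - ħ·Q`, and
`R^{t₂}(x) ∘ R^{t₂}(ħ(M-N) - x) = x(ħ(M-N) - x)·id`; in particular for
`x ≠ 0`, `x ≠ ħ(M-N)` the operator `R^{t₂}(x)` is invertible with inverse
proportional to `R^{t₂}(ħ(M-N) - x)`. -/
theorem statement3 (M N : ℕ) (hM : 1 ≤ M) (hN : 1 ≤ N) (hb : ℂ) (hhb : hb ≠ 0) :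
    (∀ x : ℂ, pt2 M (M + N) (Rm M (M + N) hb x)
        = x • (1 : E2 (M + N)) - hb • Qm M (M + N)) ∧
    (∀ x : ℂ,
      pt2 M (M + N) (Rm M (M + N) hb x) *
        pt2 M (M + N) (Rm M (M + N) hb (hb * ((M : ℂ) - (N : ℂ)) - x))
      = (x * (hb * ((M : ℂ) - (N : ℂ)) - x)) • (1 : E2 (M + N))) ∧
    (∀ x : ℂ, x ≠ 0 → x ≠ hb * ((M : ℂ) - (N : ℂ)) →
      pt2 M (M + N) (Rm M (M + N) hb x) *
        ((x * (hb * ((M : ℂ) - (N : ℂ)) - x))⁻¹ •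
          pt2 M (M + N) (Rm M (M + N) hb (hb * ((M : ℂ) - (N : ℂ)) - x))) = 1 ∧
      ((x * (hb * ((M : ℂ) - (N : ℂ)) - x))⁻¹ •
          pt2 M (M + N) (Rm M (M + N) hb (hb * ((M : ℂ) - (N : ℂ)) - x))) *
        pt2 M (M + N) (Rm M (M + N) hb x) = 1) := by
  exact statement3' M N hM hN hb hhb

end SuperSpin
end
end

section
/- For every ξ ∈ ℂ and all integers 0 ≤ L₁ ≤ L₂ ≤ n, the diagonal matrix-valued function K(u) with K_{jj}(u) = u+ξ for L₁ < j ≤ L₂ and K_{jj}(u) = ξ−u for j ≤ L₁ or j > L₂ satisfies the graded reflection equation for all u, v ∈ ℂ. -/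
open scoped BigOperators

noncomputable section

namespace SuperSpin

lemma sgn_aux (a b : ℕ) : (-1 : ℂ) ^ (a * b) * (-1) ^ (b * a) = 1 := by
  rw [← pow_add]
  exact Even.neg_one_pow (by rw [mul_comm b a]; exact ⟨a * b, rfl⟩)

lemma Pm_mul_Pm (M n : ℕ) : Pm M n * Pm M n = 1 := by
  ext p q
  rw [Matrix.mul_apply, Finset.sum_eq_single (p.2, p.1)]
  · rcases p with ⟨p1, p2⟩
    rcases q with ⟨q1, q2⟩
    simp only [Pm, Matrix.of_apply, Matrix.one_apply, Prod.mk.injEq]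
    by_cases h1 : p1 = q1 <;> by_cases h2 : p2 = q2 <;>
      simp [h1, h2, Prod.ext_iff, sgn_aux, Ne.symm]
  · intro r _ hr
    simp only [Pm, Matrix.of_apply]
    rw [if_neg]
    · ring
    · rintro ⟨h1, h2⟩
      exact hr (Prod.ext h2.symm h1.symm)
  · simp

lemma Pm_mul_diag (M n : ℕ) (f : Fin n × Fin n → ℂ) :
    Pm M n * Matrix.diagonal f = Matrix.diagonal (fun p => f (p.2, p.1)) * Pm M n := by
  ext p q
  rw [Matrix.mul_diagonal, Matrix.diagonal_mul]
  simp only [Pm, Matrix.of_apply]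
  split_ifs with h
  · obtain ⟨h1, h2⟩ := h
    rw [mul_comm]
    congr 1
    rw [h1, h2]
  · ring

lemma m1_diag {n : ℕ} (d : Fin n → ℂ) :
    m1 (Matrix.diagonal d) = Matrix.diagonal (fun p : Fin n × Fin n => d p.1) := by
  ext p q
  by_cases h1 : p.1 = q.1 <;> by_cases h2 : p.2 = q.2 <;>
    simp [m1, Matrix.diagonal_apply, Prod.ext_iff, h1, h2]

lemma m2_diag {n : ℕ} (d : Fin n → ℂ) :
    m2 (Matrix.diagonal d) = Matrix.diagonal (fun p : Fin n × Fin n => d p.2) := by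
  ext p q
  by_cases h1 : p.1 = q.1 <;> by_cases h2 : p.2 = q.2 <;>
    simp [m2, Matrix.diagonal_apply, Prod.ext_iff, h1, h2]

lemma R21_eq (M n : ℕ) (hb x : ℂ) : R21 M n hb x = Rm M n hb x := by
  simp only [R21, Rm, mul_sub, sub_mul, mul_smul_comm, smul_mul_assoc, mul_one, one_mul,
    Pm_mul_Pm]

lemma key (n : ℕ) (P A B A' B' : E2 n) (x y hb : ℂ)
    (hPP : P * P = 1)
    (hPA : P * A = B' * P) (hPB : P * B = A' * P)
    (hPA' : P * A' = B * P) (hPB' : P * B' = A * P)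
    (hAB : A * B = B * A) (hBB' : B' * B = B * B')
    (hs : x • (B' * B) + y • (A * B) = y • (A' * B') + x • (A' * A)) :
    (x • 1 - hb • P) * A * (y • 1 - hb • P) * B
      = B * (y • 1 - hb • P) * A * (x • 1 - hb • P) := by
  have e1 : A * P = P * B' := hPB'.symm
  have e2 : B * P = P * A' := hPA'.symm
  have L : (x • 1 - hb • P) * A * (y • 1 - hb • P) * B
      = (x * y) • (A * B) + (hb * hb) • (B' * B)
        - (x * hb) • (P * (B' * B)) - (hb * y) • (P * (A * B)) := by
    have t1 : A * P * B = P * (B' * B) := by rw [e1, mul_assoc]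
    have t2 : P * A * P * B = (B' * B) := by
      rw [hPA, mul_assoc B' P P, hPP, mul_one]
    calc (x • 1 - hb • P) * A * (y • 1 - hb • P) * B
        = (x * y) • (A * B) - (x * hb) • (A * P * B)
          - (hb * y) • (P * A * B) + (hb * hb) • (P * A * P * B) := by
          simp only [sub_mul, mul_sub, smul_mul_assoc, mul_smul_comm, one_mul, mul_one,
            smul_smul, smul_sub, sub_smul]
          module
      _ = _ := by rw [t2, t1, mul_assoc P A B]; module
  have R : B * (y • 1 - hb • P) * A * (x • 1 - hb • P)
      = (y * x) • (B * A) + (hb * hb) • (B * B')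
        - (y * hb) • (P * (A' * B')) - (hb * x) • (P * (A' * A)) := by
    have t1 : B * A * P = P * (A' * B') := by
      rw [mul_assoc, e1, ← mul_assoc, e2, mul_assoc]
    have t2 : B * P * A = P * (A' * A) := by rw [e2, mul_assoc]
    have t3 : B * P * A * P = B * B' := by
      rw [mul_assoc (B * P) A P, e1, ← mul_assoc, mul_assoc B P P, hPP, mul_one]
    calc B * (y • 1 - hb • P) * A * (x • 1 - hb • P)
        = (y * x) • (B * A) - (y * hb) • (B * A * P)
          - (hb * x) • (B * P * A) + (hb * hb) • (B * P * A * P) := by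
          simp only [sub_mul, mul_sub, smul_mul_assoc, mul_smul_comm, one_mul, mul_one,
            smul_smul, smul_sub, sub_smul]
          module
      _ = _ := by rw [t3, t2, t1]; module
  rw [L, R, ← hAB, ← hBB']
  have hsP : x • (P * (B' * B)) + y • (P * (A * B))
      = y • (P * (A' * B')) + x • (P * (A' * A)) := by
    have := congrArg (fun X => P * X) hs
    simpa [mul_add, mul_smul_comm] using this
  have h2 := congrArg (fun X => hb • X) hsP
  simp only [smul_add, smul_smul] at h2
  have hS : (x * hb) • (P * (B' * B)) + (hb * y) • (P * (A * B))
      = (y * hb) • (P * (A' * B')) + (hb * x) • (P * (A' * A)) := by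
    calc (x * hb) • (P * (B' * B)) + (hb * y) • (P * (A * B))
        = (hb * x) • (P * (B' * B)) + (hb * y) • (P * (A * B)) := by rw [mul_comm x hb]
      _ = (hb * y) • (P * (A' * B')) + (hb * x) • (P * (A' * A)) := h2
      _ = _ := by rw [mul_comm y hb]
  rw [sub_sub, sub_sub, hS, mul_comm x y]

/-- For every `ξ ∈ ℂ` and `0 ≤ L₁ ≤ L₂ ≤ n`, the diagonal matrix
`K(u)` with entries `u + ξ` on the block `L₁ < j ≤ L₂` and `ξ - u` elsewhere
satisfies the graded reflection equation. -/
theorem statement4 (M N : ℕ) (hM : 1 ≤ M) (hN : 1 ≤ N) (hb : ℂ) (hhb : hb ≠ 0)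
    (ξ : ℂ) (L₁ L₂ : ℕ) (h12 : L₁ ≤ L₂) (h2n : L₂ ≤ M + N) :
    GRE M (M + N) hb (Kdiag (M + N) ξ L₁ L₂) := by
  intro u v
  set n := M + N with hn
  set k : ℂ → Fin n → ℂ := fun w j => kdval ξ L₁ L₂ ((j : ℕ) + 1) w with hk
  have hK : ∀ w, Kdiag n ξ L₁ L₂ w = Matrix.diagonal (k w) := fun w => rfl
  rw [R21_eq, R21_eq, hK, hK, m1_diag, m2_diag]
  show Rm M n hb (u - v) * _ * Rm M n hb (u + v) * _ = _
  unfold Rm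
  apply key n (Pm M n)
    (Matrix.diagonal (fun p : Fin n × Fin n => k u p.1))
    (Matrix.diagonal (fun p : Fin n × Fin n => k v p.2))
    (Matrix.diagonal (fun p : Fin n × Fin n => k v p.1))
    (Matrix.diagonal (fun p : Fin n × Fin n => k u p.2))
  · exact Pm_mul_Pm M n
  · exact Pm_mul_diag M n _
  · exact Pm_mul_diag M n _
  · exact Pm_mul_diag M n _
  · exact Pm_mul_diag M n _
  · rw [Matrix.diagonal_mul_diagonal, Matrix.diagonal_mul_diagonal]
    exact congrArg Matrix.diagonal (funext fun i => mul_comm _ _)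
  · rw [Matrix.diagonal_mul_diagonal, Matrix.diagonal_mul_diagonal]
    exact congrArg Matrix.diagonal (funext fun i => mul_comm _ _)
  · ext p q
    simp only [Matrix.diagonal_mul_diagonal, Matrix.add_apply, Matrix.smul_apply,
      Matrix.diagonal_apply, smul_eq_mul]
    by_cases h : p = q
    · subst h
      simp only [if_pos rfl, hk, kdval]
      split_ifs <;> ring
    · simp [h]


end SuperSpin
end
end

section
/- The monodromy matrix of the inhomogeneous fundamental gl(M|N) chain satisfies the RTT (FRT exchange) relation: for all u, v ∈ ℂ, R₁₂(u−v)∘𝒯₁(u)∘𝒯₂(v) = 𝒯₂(v)∘𝒯₁(u)∘R₁₂(u−v) in End(V⊗V⊗H), where, regarding V⊗V⊗H = V^{⊗(L+2)} with two auxiliary factors in positions 1,2 and quantum factors in positions 3,…,L+2, one sets 𝒯₁(u) = R_{1,3}(u−a₁)∘R_{1,4}(u−a₂)∘⋯∘R_{1,L+2}(u−a_L) and 𝒯₂(v) = R_{2,3}(v−a₁)∘R_{2,4}(v−a₂)∘⋯∘R_{2,L+2}(v−a_L) (Koszul embeddings), and R₁₂(x) = R(x)⊗id_H. -/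
open scoped BigOperators

noncomputable section

/-!
Let `S_m` act on `V^{⊗m}` by permuting the tensor factors with the Koszul sign, i.e. `-1` to the
number of pairs of odd factors whose order is reversed. This sign is a cocycle modulo `2`, so the
action is a representation, and the graded permutation `P_{ij}` is the image of the transposition
`(i j)`. The relations `(i j)(i k) = (j k)(i j)`, ... between transpositions then give the
Yang–Baxter equation `R_{ij} R_{ik} R_{jk} = R_{jk} R_{ik} R_{ij}` for `R(w) = w - ħ P`, and
operators `R` on disjoint pairs of factors commute. Pushing `R_{12}` through `𝒯₁(u) 𝒯₂(v)` one
quantum site at a time with these two facts yields the RTT relation.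
-/

open Equiv Finset

theorem neg_one_pow_eq_of_natCast_eq {R : Type*} [Monoid R] [HasDistribNeg R] {a b : ℕ}
    (h : (a : ZMod 2) = b) : (-1 : R) ^ a = (-1) ^ b :=
  neg_one_pow_congr <| by
    rw [← ZMod.natCast_eq_zero_iff_even, ← ZMod.natCast_eq_zero_iff_even, h]

theorem Fintype.sum_prod_eq_sum_lt_add_swap {α β : Type*} [LinearOrder α] [Fintype α]
    [AddCommMonoid β] (F : α × α → β) (hF : ∀ a, F (a, a) = 0) :
    ∑ p, F p = ∑ p : α × α, if p.1 < p.2 then F p + F p.swap else 0 := by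
  have hsplit : ∀ p : α × α,
      F p = (if p.1 < p.2 then F p else 0) + if p.2 < p.1 then F p else 0 := by
    rintro ⟨a, b⟩
    rcases lt_trichotomy a b with h | rfl | h
    · simp [h, h.not_gt]
    · simp [hF]
    · simp [h, h.not_gt]
  rw [Finset.sum_congr rfl fun p _ => hsplit p, sum_add_distrib,
    Fintype.sum_equiv (Equiv.prodComm _ _) (fun p => if p.2 < p.1 then F p else 0)
      (fun p => if p.1 < p.2 then F p.swap else 0) (fun p => rfl), ← sum_add_distrib]
  refine Finset.sum_congr rfl fun p _ => ?_
  split_ifs <;> simp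

theorem Equiv.eq_comp_swap_iff {m α : Type*} [DecidableEq m] {i j : m} {f g : m → α} :
    g = f ∘ swap i j ↔ (∀ l, l ≠ i → l ≠ j → f l = g l) ∧ f i = g j ∧ f j = g i := by
  constructor
  · rintro rfl
    refine ⟨fun l hi hj => ?_, ?_, ?_⟩ <;> simp [swap_apply_of_ne_of_ne, *]
  · rintro ⟨hl, hi, hj⟩
    funext l
    rcases eq_or_ne l i with rfl | hli
    · simp [hj]
    rcases eq_or_ne l j with rfl | hlj
    · simp [hi]
    · simp [swap_apply_of_ne_of_ne hli hlj, hl l hli hlj]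

theorem yangBaxter_of_conj {𝕜 A : Type*} [CommRing 𝕜] [Ring A] [Algebra 𝕜 A] {a b c : A}
    (hab : a * b = c * a) (hbc : b * c = a * b) (hba : b * a = a * c) (hcb : c * b = a * c)
    (h x z : 𝕜) :
    (x • 1 - h • a) * ((x + z) • 1 - h • b) * (z • 1 - h • c)
      = (z • 1 - h • c) * ((x + z) • 1 - h • b) * (x • 1 - h • a) := by
  have habc : a * (b * c) = c * (b * a) := by rw [← mul_assoc, hab, mul_assoc, ← hba]
  simp only [sub_mul, mul_sub, smul_mul_assoc, mul_smul_comm, one_mul, mul_one,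
    mul_assoc]
  rw [habc, hbc, hba, hcb, ← hab]
  module

theorem List.prod_ofFn_exchange {G : Type*} [Monoid G] {L : ℕ} (r : G) (a b : Fin L → G)
    (hexch : ∀ k, r * a k * b k = b k * a k * r) (hcomm : ∀ j k, j ≠ k → Commute (a j) (b k)) :
    r * (List.ofFn a).prod * (List.ofFn b).prod
      = (List.ofFn b).prod * (List.ofFn a).prod * r := by
  induction L with
  | zero => simp
  | succ L ih =>
    simp only [List.ofFn_succ, List.prod_cons]
    set pa := (List.ofFn fun k : Fin L => a k.succ).prod
    set pb := (List.ofFn fun k : Fin L => b k.succ).prod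
    have hb0 : Commute pa (b 0) := (Commute.list_prod_right _ _ <| by
      simp only [List.mem_ofFn, forall_exists_index]
      rintro _ k rfl
      exact (hcomm k.succ 0 k.succ_ne_zero).symm).symm
    have ha0 : Commute (a 0) pb := Commute.list_prod_right _ _ <| by
      simp only [List.mem_ofFn, forall_exists_index]
      rintro _ k rfl
      exact hcomm 0 k.succ k.succ_ne_zero.symm
    have htail : r * pa * pb = pb * pa * r :=
      ih (fun k => a k.succ) (fun k => b k.succ) (fun k => hexch k.succ)
        fun j k hjk => hcomm j.succ k.succ (Fin.succ_injective _ |>.ne hjk)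
    calc r * (a 0 * pa) * (b 0 * pb) = r * a 0 * b 0 * (pa * pb) := by
          simp only [mul_assoc, hb0.left_comm]
      _ = b 0 * a 0 * (r * pa * pb) := by rw [hexch 0]; simp only [mul_assoc]
      _ = b 0 * pb * (a 0 * pa) * r := by rw [htail]; simp only [mul_assoc, ha0.left_comm]

namespace SuperSpin

section Koszul

variable (M : ℕ) {n m : ℕ}

def koszulExp (σ : Perm (Fin m)) (f : Fin m → Fin n) : ℕ :=
  ∑ p : Fin m × Fin m with p.1 < p.2 ∧ σ p.2 < σ p.1, gr M (f (σ p.1)) * gr M (f (σ p.2))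

theorem koszulExp_one (f : Fin m → Fin n) : koszulExp M 1 f = 0 := by
  rw [koszulExp, filter_false_of_mem fun p _ h => lt_asymm h.1 h.2, sum_empty]

/-- A pair of positions is reversed by `σ * τ` iff it is reversed by exactly one of `τ` and
(on its image under `τ`) `σ`. -/
theorem koszulExp_mul (σ τ : Perm (Fin m)) (f : Fin m → Fin n) :
    (koszulExp M (σ * τ) f : ZMod 2) = koszulExp M σ f + koszulExp M τ (f ∘ σ) := by
  set u : Fin m × Fin m → ZMod 2 := fun p => gr M (f (σ (τ p.1))) * gr M (f (σ (τ p.2)))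
  have hσ : (koszulExp M σ f : ZMod 2) = ∑ p : Fin m × Fin m, if p.1 < p.2 then
      ((if τ p.1 < τ p.2 ∧ σ (τ p.2) < σ (τ p.1) then u p else 0) +
        if τ p.2 < τ p.1 ∧ σ (τ p.1) < σ (τ p.2) then u p else 0) else 0 := by
    rw [koszulExp, Nat.cast_sum, sum_filter,
      ← Equiv.sum_comp (Equiv.prodCongr τ τ), Fintype.sum_prod_eq_sum_lt_add_swap _ (by simp)]
    refine Finset.sum_congr rfl fun p _ => ?_
    simp [u, mul_comm]
  rw [hσ, koszulExp, koszulExp, Nat.cast_sum, Nat.cast_sum, sum_filter, sum_filter,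
    ← sum_add_distrib]
  refine Finset.sum_congr rfl fun p _ => ?_
  by_cases hp : p.1 < p.2
  · have hτ : τ p.1 ≠ τ p.2 := τ.injective.ne hp.ne
    have hστ : σ (τ p.1) ≠ σ (τ p.2) := (σ * τ).injective.ne hp.ne
    simp only [hp, true_and, if_true, Perm.mul_apply, Function.comp_apply]
    rcases hτ.lt_or_gt with h1 | h1 <;> rcases hστ.lt_or_gt with h2 | h2 <;>
      simp [h1, h2, h1.not_gt, h2.not_gt, u, CharTwo.add_self_eq_zero]
  · simp [hp]

theorem koszulExp_swap {i j : Fin m} (hij : i < j) (f : Fin m → Fin n) :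
    koszulExp M (swap i j) f =
      gr M (f i) * gr M (f j) + (gr M (f i) + gr M (f j)) * ∑ l ∈ Ioo i j, gr M (f l) := by
  have key : ∀ p : Fin m × Fin m,
      (if p.1 < p.2 ∧ swap i j p.2 < swap i j p.1 then
        gr M (f (swap i j p.1)) * gr M (f (swap i j p.2)) else 0) =
      (if p = (i, j) then gr M (f i) * gr M (f j) else 0) +
      (if p.1 = i ∧ p.2 ∈ Ioo i j then gr M (f j) * gr M (f p.2) else 0) +
      (if p.2 = j ∧ p.1 ∈ Ioo i j then gr M (f i) * gr M (f p.1) else 0) := by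
    rintro ⟨a, b⟩
    simp only [swap_apply_def, Prod.mk.injEq, mem_Ioo]
    split_ifs <;> subst_vars <;> first | omega | ring
  have hleft : ∑ p : Fin m × Fin m, (if p.1 = i ∧ p.2 ∈ Ioo i j then
      gr M (f j) * gr M (f p.2) else 0) = gr M (f j) * ∑ l ∈ Ioo i j, gr M (f l) := by
    rw [Fintype.sum_prod_type, mul_sum]
    simp [ite_and, sum_ite_mem, -mem_Ioo]
  have hright : ∑ p : Fin m × Fin m, (if p.2 = j ∧ p.1 ∈ Ioo i j then
      gr M (f i) * gr M (f p.1) else 0) = gr M (f i) * ∑ l ∈ Ioo i j, gr M (f l) := by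
    rw [Fintype.sum_prod_type_right, mul_sum]
    simp [ite_and, sum_ite_mem, -mem_Ioo]
  rw [koszulExp, sum_filter, Finset.sum_congr rfl fun p _ => key p, sum_add_distrib,
    sum_add_distrib, hleft, hright, sum_ite_eq' univ (i, j)]
  simp only [mem_univ, if_true]
  ring

/-- `koszulRep M σ` sends `e_{f ∘ σ}` to `±e_f`: the factor in position `q` moves to position
`σ q`. -/
def koszulRep : Perm (Fin m) →* Ten n m where
  toFun σ := Matrix.of fun f g => if g = f ∘ σ then (-1 : ℂ) ^ koszulExp M σ f else 0
  map_one' := by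
    ext f g
    simp [koszulExp_one, Matrix.one_apply, eq_comm]
  map_mul' σ τ := by
    ext f h
    rw [Matrix.mul_apply, Finset.sum_eq_single (f ∘ σ) (fun g _ hg => by simp [hg])
      (by simp)]
    simp only [Matrix.of_apply, if_true, Perm.coe_mul, ← Function.comp_assoc, mul_ite,
      mul_zero, ← pow_add]
    congr 1
    exact neg_one_pow_eq_of_natCast_eq (by push_cast; exact koszulExp_mul M σ τ f)

end Koszul

section Embedding

variable (M n : ℕ) {m : ℕ}

theorem kEmb_one (i j : Fin m) : kEmb M n m i j 1 = 1 := by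
  ext f g
  simp only [kEmb, Matrix.one_apply, Matrix.of_apply, Prod.mk.injEq]
  by_cases hfg : f = g
  · subst hfg
    simp [← two_mul, pow_mul, mul_assoc]
  · have hne : ¬((∀ l, l ≠ i → l ≠ j → f l = g l) ∧ f i = g i ∧ f j = g j) :=
      fun ⟨hl, hi, hj⟩ => hfg <| funext fun l => by
        rcases eq_or_ne l i with rfl | hli
        · exact hi
        rcases eq_or_ne l j with rfl | hlj
        · exact hj
        · exact hl l hli hlj
    rw [if_neg hfg]
    split_ifs <;> simp_all

theorem kEmb_Pm {i j : Fin m} (hij : i < j) :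
    kEmb M n m i j (Pm M n) = koszulRep M (swap i j) := by
  ext f g
  simp only [kEmb, Pm, koszulRep, MonoidHom.coe_mk, OneHom.coe_mk, Matrix.of_apply]
  by_cases hg : g = f ∘ swap i j
  · obtain ⟨hl, hi, hj⟩ := eq_comp_swap_iff.1 hg
    rw [if_pos hg, if_pos hl, if_pos ⟨hi, hj⟩, one_mul, ← pow_add, koszulExp_swap M hij,
      filter_lt_lt_eq_Ioo]
    subst hg
    have hIoo : ∑ l ∈ Ioo i j, gr M (f (swap i j l)) = ∑ l ∈ Ioo i j, gr M (f l) :=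
      sum_congr rfl fun l hl => by
        rw [mem_Ioo] at hl
        simp [swap_apply_of_ne_of_ne hl.1.ne' hl.2.ne]
    simp only [Function.comp_apply, swap_apply_left, swap_apply_right, hIoo]
    ring
  · rw [if_neg hg]
    by_cases hl : ∀ l, l ≠ i → l ≠ j → f l = g l
    · rw [if_pos hl, if_neg fun h => hg (eq_comp_swap_iff.2 ⟨hl, h⟩)]
      simp
    · simp [hl]

theorem kEmb_Rm {i j : Fin m} (hij : i < j) (hb w : ℂ) :
    kEmb M n m i j (Rm M n hb w) = w • 1 - hb • koszulRep M (swap i j) := by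
  have hlin : kEmb M n m i j (Rm M n hb w)
      = w • kEmb M n m i j 1 - hb • kEmb M n m i j (Pm M n) := by
    ext f g
    simp only [kEmb, Rm, Matrix.of_apply, Matrix.sub_apply, Matrix.smul_apply, smul_eq_mul]
    ring
  rw [hlin, kEmb_one, kEmb_Pm M n hij]

theorem kEmb_Rm_yangBaxter {i j k : Fin m} (hij : i < j) (hjk : j < k) (hb x z : ℂ) :
    kEmb M n m i j (Rm M n hb x) * kEmb M n m i k (Rm M n hb (x + z)) *
        kEmb M n m j k (Rm M n hb z)
      = kEmb M n m j k (Rm M n hb z) * kEmb M n m i k (Rm M n hb (x + z)) *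
        kEmb M n m i j (Rm M n hb x) := by
  have hik := hij.trans hjk
  rw [kEmb_Rm M n hij, kEmb_Rm M n hik, kEmb_Rm M n hjk]
  refine yangBaxter_of_conj ?_ ?_ ?_ ?_ hb x z <;> simp only [← map_mul]
  · rw [mul_swap_eq_swap_mul, swap_apply_left, swap_apply_of_ne_of_ne hik.ne' hjk.ne']
  · rw [mul_swap_eq_swap_mul, swap_apply_of_ne_of_ne hij.ne' hjk.ne, swap_apply_right,
      swap_comm]
  · rw [swap_mul_eq_mul_swap, swap_inv, swap_apply_left, swap_apply_of_ne_of_ne hik.ne' hjk.ne']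
  · rw [mul_swap_eq_swap_mul, swap_apply_of_ne_of_ne hij.ne hik.ne, swap_apply_right]

theorem kEmb_Rm_commute {i j k l : Fin m} (hij : i < j) (hkl : k < l) (hik : i ≠ k)
    (hil : i ≠ l) (hjk : j ≠ k) (hjl : j ≠ l) (hb w w' : ℂ) :
    Commute (kEmb M n m i j (Rm M n hb w)) (kEmb M n m k l (Rm M n hb w')) := by
  have hswap : Commute (koszulRep M (swap i j) : Ten n m) (koszulRep M (swap k l)) := by
    rw [Commute, SemiconjBy, ← map_mul, ← map_mul, mul_swap_eq_swap_mul,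
      swap_apply_of_ne_of_ne hik.symm hjk.symm, swap_apply_of_ne_of_ne hil.symm hjl.symm]
  rw [kEmb_Rm M n hij, kEmb_Rm M n hkl]
  exact .sub_left ((Commute.one_left _).smul_left w)
    (.smul_left (.sub_right ((Commute.one_right _).smul_right w') (hswap.smul_right hb)) hb)

end Embedding

theorem statement6_general (M N : ℕ) (hb : ℂ) (L : ℕ) (sh : Fin L → ℂ) :
    ∀ u v : ℂ,
      kEmb M (M + N) (L + 2) 0 1 (Rm M (M + N) hb (u - v)) *
        (List.ofFn fun k : Fin L =>
          kEmb M (M + N) (L + 2) 0 k.succ.succ (Rm M (M + N) hb (u - sh k))).prod *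
        (List.ofFn fun k : Fin L =>
          kEmb M (M + N) (L + 2) 1 k.succ.succ (Rm M (M + N) hb (v - sh k))).prod
      = (List.ofFn fun k : Fin L =>
          kEmb M (M + N) (L + 2) 1 k.succ.succ (Rm M (M + N) hb (v - sh k))).prod *
        (List.ofFn fun k : Fin L =>
          kEmb M (M + N) (L + 2) 0 k.succ.succ (Rm M (M + N) hb (u - sh k))).prod *
        kEmb M (M + N) (L + 2) 0 1 (Rm M (M + N) hb (u - v)) := by
  intro u v
  have h12 : ∀ k : Fin L, (1 : Fin (L + 2)) < k.succ.succ := Fin.one_lt_succ_succ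
  refine List.prod_ofFn_exchange _ _ _ (fun k => ?_) fun j k hjk => ?_
  · simpa only [sub_add_sub_cancel] using
      kEmb_Rm_yangBaxter M (M + N) Fin.zero_lt_one (h12 k) hb (u - v) (v - sh k)
  · exact kEmb_Rm_commute M (M + N) (Fin.zero_lt_one.trans (h12 j)) (h12 k) Fin.zero_ne_one
      (Fin.zero_lt_one.trans (h12 k)).ne (h12 j).ne' (fun h => hjk (by simpa using h)) hb _ _

/-- The RTT (FRT exchange) relation for the monodromy matrix of
the inhomogeneous fundamental chain, on `V ⊗ V ⊗ H = V^{⊗(L+2)}` with the two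
auxiliary spaces in positions 1,2:
`R₁₂(u-v) 𝒯₁(u) 𝒯₂(v) = 𝒯₂(v) 𝒯₁(u) R₁₂(u-v)`. -/
theorem statement6 (M N : ℕ) (hM : 1 ≤ M) (hN : 1 ≤ N) (hb : ℂ) (hhb : hb ≠ 0)
    (L : ℕ) (hL : 1 ≤ L) (sh : Fin L → ℂ) :
    ∀ u v : ℂ,
      kEmb M (M + N) (L + 2) 0 1 (Rm M (M + N) hb (u - v)) *
        (List.ofFn fun k : Fin L =>
          kEmb M (M + N) (L + 2) 0 k.succ.succ (Rm M (M + N) hb (u - sh k))).prod *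
        (List.ofFn fun k : Fin L =>
          kEmb M (M + N) (L + 2) 1 k.succ.succ (Rm M (M + N) hb (v - sh k))).prod
      = (List.ofFn fun k : Fin L =>
          kEmb M (M + N) (L + 2) 1 k.succ.succ (Rm M (M + N) hb (v - sh k))).prod *
        (List.ofFn fun k : Fin L =>
          kEmb M (M + N) (L + 2) 0 k.succ.succ (Rm M (M + N) hb (u - sh k))).prod *
        kEmb M (M + N) (L + 2) 0 1 (Rm M (M + N) hb (u - v)) :=
  statement6_general M N hb L sh

end SuperSpin
end
end

section
/- The vector v⁺ = e₁⊗⋯⊗e₁ is a highest weight vector for the monodromy matrix of the inhomogeneous fundamental gl(M|N) chain: for all u ∈ ℂ, 𝒯_{ab}(u)v⁺ = 0 whenever 1 ≤ b < a ≤ n, and 𝒯_{kk}(u)v⁺ = λ_k(u)·v⁺ for every 1 ≤ k ≤ n, where λ₁(u) = Π_{m=1}^L (u−a_m−ħ) and λ_k(u) = Π_{m=1}^L (u−a_m) for 2 ≤ k ≤ n. -/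
open scoped BigOperators

noncomputable section

namespace SuperSpin

/-!
Let `e₁` be the even basis vector making up `v⁺`. Since `e₁` is even,
`R(w) (e_b ⊗ e₁) = w e_b ⊗ e₁ - ħ e₁ ⊗ e_b` and `R(w) (e₁ ⊗ e₁) = (w - ħ) e₁ ⊗ e₁`, so
`e₁ ⊗ v⁺` is an eigenvector of `𝒯(u)` with eigenvalue `λ₁(u)`. Apply the factors of `𝒯(u)`
to `e_b ⊗ v⁺` one at a time: each step multiplies the `e_b ⊗ v⁺` component by `u - a_m` and adds
a vector with `e₁` in the auxiliary slot and in every quantum slot not yet acted on. Such vectors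
are eigenvectors of all the remaining factors, so they never feed back. Hence every component of
`𝒯(u) (e_b ⊗ v⁺)` with auxiliary index `a ≠ 1` is that of `∏ (u - a_m) e_b ⊗ v⁺`.
-/

open Matrix

section Monodromy

variable {M n : ℕ}

lemma eq_iff_of_forall_ne_ne {α : Type*} {m : ℕ} {f g : Fin m → α} (i j : Fin m) :
    f = g ↔ (∀ l, l ≠ i → l ≠ j → f l = g l) ∧ f i = g i ∧ f j = g j := by
  refine ⟨by rintro rfl; simp, fun ⟨h, hi, hj⟩ => funext fun l => ?_⟩
  by_cases hli : l = i
  · rw [hli, hi]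
  by_cases hlj : l = j
  · rw [hlj, hj]
  exact h l hli hlj

lemma eq_comp_swap_iff {α : Type*} {m : ℕ} {f g : Fin m → α} (i j : Fin m) :
    f = g ∘ Equiv.swap i j ↔ (∀ l, l ≠ i → l ≠ j → f l = g l) ∧ f i = g j ∧ f j = g i := by
  rw [eq_iff_of_forall_ne_ne i j]
  simp +contextual [Equiv.swap_apply_of_ne_of_ne]

-- `hmid` kills the Koszul sign `(-1)^([g i] * ∑_{i<l<j} [g l])` of the swapped term.
lemma kEmb_Rm_apply {m : ℕ} {i j : Fin m} {g : Fin m → Fin n} (hg : gr M (g j) = 0)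
    (hmid : gr M (g i) = 0 ∨ ∀ l, i < l → l < j → gr M (g l) = 0) (hb w : ℂ)
    (f : Fin m → Fin n) :
    kEmb M n m i j (Rm M n hb w) f g
      = (if f = g then w else 0) - (if f = g ∘ Equiv.swap i j then hb else 0) := by
  have hsign :
      gr M (g i) * ∑ l ∈ Finset.univ.filter (fun l => i < l ∧ l < j), gr M (g l) = 0 := by
    rcases hmid with h | h
    · rw [h, zero_mul]
    · rw [Finset.sum_eq_zero fun l hl => by
        obtain ⟨hil, hlj⟩ := (Finset.mem_filter.1 hl).2
        exact h l hil hlj, mul_zero]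
  simp only [eq_comp_swap_iff i j, eq_iff_of_forall_ne_ne i j, kEmb, Rm, Pm,
    Matrix.of_apply, Matrix.sub_apply, Matrix.smul_apply, Matrix.one_apply, Prod.mk.injEq,
    smul_eq_mul, hg, mul_zero, pow_zero]
  by_cases hoff : ∀ l, l ≠ i → l ≠ j → f l = g l
  · simp only [if_pos hoff, and_iff_right hoff, one_mul, add_zero]
    rw [sub_mul, mul_assoc w, mul_assoc hb]
    congr 1
    · by_cases h1 : f i = g i ∧ f j = g j
      · simp [h1, hg]
      · simp [h1]
    · by_cases h2 : f i = g j ∧ f j = g i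
      · simp [h2, hsign]
      · simp [h2]
  · simp [hoff]

lemma kEmb_Rm_mulVec_single {m : ℕ} {i j : Fin m} {g : Fin m → Fin n} (hg : gr M (g j) = 0)
    (hmid : gr M (g i) = 0 ∨ ∀ l, i < l → l < j → gr M (g l) = 0) (hb w : ℂ) :
    kEmb M n m i j (Rm M n hb w) *ᵥ Pi.single g 1
      = w • Pi.single g 1 - hb • Pi.single (g ∘ Equiv.swap i j) 1 := by
  funext f
  simp [kEmb_Rm_apply hg hmid, Pi.single_apply]

lemma kEmb_Rm_mulVec_of_support {m : ℕ} {i j : Fin m} {z : Fin n} (hz : gr M z = 0)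
    {s : (Fin m → Fin n) → ℂ} (hs : ∀ h, s h ≠ 0 → h i = z ∧ h j = z) (hb w : ℂ) :
    kEmb M n m i j (Rm M n hb w) *ᵥ s = (w - hb) • s := by
  funext f
  have hcol : ∀ h,
      kEmb M n m i j (Rm M n hb w) f h * s h = if f = h then (w - hb) * s h else 0 := by
    intro h
    by_cases hsh : s h = 0
    · simp [hsh]
    obtain ⟨hi, hj⟩ := hs h hsh
    have hswap : h ∘ Equiv.swap i j = h := by
      rw [eq_comm, eq_comp_swap_iff]
      exact ⟨fun _ _ _ => rfl, hi.trans hj.symm, hj.trans hi.symm⟩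
    rw [kEmb_Rm_apply (hj ▸ hz) (.inl (hi ▸ hz)), hswap]
    split_ifs <;> ring
  simp only [mulVec, dotProduct, hcol, Finset.sum_ite_eq, Finset.mem_univ, if_true,
    Pi.smul_apply, smul_eq_mul]

lemma list_prod_mulVec_eq_smul {ι σ R : Type*} [Fintype σ] [DecidableEq σ] [CommRing R]
    (l : List ι) (X : ι → Matrix σ σ R) (c : ι → R) (v : σ → R) (hv : ∀ i ∈ l, X i *ᵥ v = c i • v) :
    (l.map X).prod *ᵥ v = (l.map c).prod • v := by
  induction l with
  | nil => simp
  | cons i l ih =>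
    rw [List.map_cons, List.prod_cons, ← mulVec_mulVec,
      ih fun k hk => hv k (List.mem_cons_of_mem i hk), mulVec_smul,
      hv i List.mem_cons_self, smul_smul, List.map_cons, List.prod_cons, mul_comm]

lemma _root_.Fin.cons_const {α : Type*} {L : ℕ} (x : α) :
    (Fin.cons x fun _ => x : Fin (L + 1) → α) = fun _ => x :=
  funext fun l => Fin.cases rfl (fun _ => rfl) l

variable {L : ℕ}

lemma monodromy_mulVec_single_cons {z : Fin n} (hz : gr M z = 0) (hb : ℂ) (w : Fin L → ℂ)
    (b : Fin n) (ks : List (Fin L)) (hks : ks.Nodup) :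
    ∃ s : (Fin (L + 1) → Fin n) → ℂ, (∀ h, s h ≠ 0 → h 0 = z ∧ ∀ k ∉ ks, h k.succ = z) ∧
      (ks.map fun k => kEmb M n (L + 1) 0 k.succ (Rm M n hb (w k))).prod
          *ᵥ Pi.single (Fin.cons b fun _ => z) 1
        = (ks.map w).prod • Pi.single (Fin.cons b fun _ => z) 1 + s := by
  set g : Fin (L + 1) → Fin n := Fin.cons b fun _ => z
  induction ks with
  | nil => exact ⟨0, by simp, by rw [List.map_nil, List.prod_nil, one_mulVec]; simp⟩
  | cons k ks ih =>
    obtain ⟨hk, hks⟩ := List.nodup_cons.1 hks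
    obtain ⟨s, hs, hT⟩ := ih hks
    set c := (ks.map w).prod
    have hXg := kEmb_Rm_mulVec_single (M := M) (i := 0) (j := k.succ) (g := g)
      (by simpa [g] using hz) (.inr fun l hl _ => by
        obtain ⟨l, rfl⟩ := Fin.exists_succ_eq_of_ne_zero hl.ne'; simpa [g] using hz) hb (w k)
    have hXs := kEmb_Rm_mulVec_of_support (i := 0) (j := k.succ) hz (s := s)
      (fun h hh => ⟨(hs h hh).1, (hs h hh).2 k hk⟩) hb (w k)
    refine ⟨(w k - hb) • s - (c * hb) • Pi.single (g ∘ Equiv.swap 0 k.succ) 1, ?_, ?_⟩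
    · intro h hh
      by_cases hsh : s h = 0
      · have hgh : h = g ∘ Equiv.swap 0 k.succ := by
          by_contra hne
          simp [hsh, hne] at hh
        subst hgh
        refine ⟨by simp [g], fun k' hk' => ?_⟩
        rw [Function.comp_apply, Equiv.swap_apply_of_ne_of_ne (Fin.succ_ne_zero k')
          (fun h => (List.ne_and_not_mem_of_not_mem_cons hk').1 (Fin.succ_injective _ h))]
        simp [g]
      · exact ⟨(hs h hsh).1,
          fun k' hk' => (hs h hsh).2 k' (List.ne_and_not_mem_of_not_mem_cons hk').2⟩
    · rw [List.map_cons, List.prod_cons, ← mulVec_mulVec, hT, mulVec_add,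
        mulVec_smul, hXg, hXs, List.map_cons, List.prod_cons]
      module

lemma Tmono_eq_prod_map (hb u : ℂ) (a : Fin L → ℂ) :
    Tmono M n L hb a u
      = ((List.finRange L).map fun k => kEmb M n (L + 1) 0 k.succ (Rm M n hb (u - a k))).prod := by
  rw [Tmono, List.ofFn_eq_map]

lemma Tmono_mulVec_single_const {z : Fin n} (hz : gr M z = 0) (hb u : ℂ) (a : Fin L → ℂ) :
    Tmono M n L hb a u *ᵥ Pi.single (fun _ => z) 1
      = (∏ k, (u - a k - hb)) • Pi.single (fun _ => z) 1 := by
  rw [Tmono_eq_prod_map, list_prod_mulVec_eq_smul _ _ (fun k => u - a k - hb), Fin.prod_univ_def]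
  intro k _
  refine kEmb_Rm_mulVec_of_support hz (fun h hh => ?_) hb _
  obtain rfl : h = fun _ => z := by by_contra hne; simp [hne] at hh
  exact ⟨rfl, rfl⟩

lemma Tmono_mulVec_single_cons_apply {z : Fin n} (hz : gr M z = 0) (hb u : ℂ) (a : Fin L → ℂ)
    (b : Fin n) {f : Fin (L + 1) → Fin n} (hf : f 0 ≠ z) :
    (Tmono M n L hb a u *ᵥ Pi.single (Fin.cons b fun _ => z) 1) f
      = (∏ k, (u - a k)) * Pi.single (M := fun _ => ℂ) (Fin.cons b fun _ => z) 1 f := by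
  obtain ⟨s, hs, hT⟩ := monodromy_mulVec_single_cons hz hb (fun k => u - a k) b _
    (List.nodup_finRange L)
  have hsf : s f = 0 := by_contra fun h => hf (hs f h).1
  rw [Tmono_eq_prod_map, hT, Fin.prod_univ_def]
  simp [hsf]

lemma blk_mulVec_single_apply (X : Ten n (L + 1)) (a b : Fin n) (g f : Fin L → Fin n) :
    (blk X a b *ᵥ Pi.single g 1) f = (X *ᵥ Pi.single (Fin.cons b g) 1) (Fin.cons a f) := by
  simp [blk]

lemma vplus_eq_single {z : Fin n} (hz : (z : ℕ) = 0) : vplus n L = Pi.single (fun _ => z) 1 := by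
  funext f
  simp only [vplus, Pi.single_apply, funext_iff, Fin.ext_iff, hz]

end Monodromy

theorem statement10_general (M N : ℕ) (hM : 1 ≤ M) (hb : ℂ)
    (L : ℕ) (sh : Fin L → ℂ) (u : ℂ) :
    (∀ a b : Fin (M + N), b < a →
      (blk (Tmono M (M + N) L hb sh u) a b).mulVec (vplus (M + N) L) = 0) ∧
    (∀ k : Fin (M + N),
      (blk (Tmono M (M + N) L hb sh u) k k).mulVec (vplus (M + N) L)
        = lamP L hb sh ((k : ℕ) + 1) u • vplus (M + N) L) := by
  set z : Fin (M + N) := ⟨0, by omega⟩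
  have hz : gr M z = 0 := if_pos hM
  rw [vplus_eq_single (z := z) rfl]
  refine ⟨fun a b hba => funext fun f => ?_, fun k => funext fun f => ?_⟩
  · have ha : a ≠ z := Fin.ne_of_gt (lt_of_le_of_lt (Nat.zero_le b) hba)
    rw [blk_mulVec_single_apply, Tmono_mulVec_single_cons_apply hz hb u sh b ha]
    simp [Fin.cons_inj, hba.ne']
  · rw [blk_mulVec_single_apply]
    by_cases hk : k = z
    · subst hk
      rw [Fin.cons_const, Tmono_mulVec_single_const hz]
      simp [lamP, z, Pi.single_apply, ← Fin.cons_const, Fin.cons_inj]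
    · rw [Tmono_mulVec_single_cons_apply hz hb u sh k hk, lamP,
        if_neg (by simpa [Fin.ext_iff] using hk)]
      simp [Pi.single_apply, Fin.cons_inj]

/-- `v⁺ = e₁ ⊗ ⋯ ⊗ e₁` is a highest weight vector for the
monodromy matrix: `𝒯_{ab}(u) v⁺ = 0` for `b < a`, and
`𝒯_{kk}(u) v⁺ = λ_k(u) v⁺` with `λ₁(u) = ∏ (u - a_m - ħ)` and
`λ_k(u) = ∏ (u - a_m)` for `k ≥ 2`. -/
theorem statement10 (M N : ℕ) (hM : 1 ≤ M) (hN : 1 ≤ N) (hb : ℂ) (hhb : hb ≠ 0)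
    (L : ℕ) (hL : 1 ≤ L) (sh : Fin L → ℂ) (u : ℂ) :
    (∀ a b : Fin (M + N), b < a →
      (blk (Tmono M (M + N) L hb sh u) a b).mulVec (vplus (M + N) L) = 0) ∧
    (∀ k : Fin (M + N),
      (blk (Tmono M (M + N) L hb sh u) k k).mulVec (vplus (M + N) L)
        = lamP L hb sh ((k : ℕ) + 1) u • vplus (M + N) L) :=
  statement10_general M N hM hb L sh u

end SuperSpin
end
end
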